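/- Let N = p_1^{n_1} ··· p_a^{n_a} with a ≥ 2, N ≡ 2 (mod 4), and n_i ≤ 2 for all i ≥ 2. Then box(Γ(Z_N)) = a - 1. -/

import Mathlib

def IsIntervalGraph {V : Type*} (G : SimpleGraph V) : Prop :=
  ∃ a b : V → ℝ, ∀ u v : V, u ≠ v →
    (G.Adj u v ↔ (Set.Icc (a u) (b u) ∩ Set.Icc (a v) (b v)).Nonempty)

def IsThresholdGraph {V : Type*} (G : SimpleGraph V) : Prop :=
  ∃ (w : V → ℝ) (S : ℝ), ∀ u v : V, u ≠ v → (G.Adj u v ↔ S ≤ w u + w v)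

noncomputable def boxicity {V : Type*} (G : SimpleGraph V) : ℕ :=
  sInf {d : ℕ | ∃ I : Fin d → SimpleGraph V, (∀ i, IsIntervalGraph (I i)) ∧
    ∀ u v : V, G.Adj u v ↔ (u ≠ v ∧ ∀ i, (I i).Adj u v)}

noncomputable def thresholdDim {V : Type*} (G : SimpleGraph V) : ℕ :=
  sInf {d : ℕ | ∃ I : Fin d → SimpleGraph V, (∀ i, IsThresholdGraph (I i)) ∧
    ∀ u v : V, G.Adj u v ↔ (u ≠ v ∧ ∀ i, (I i).Adj u v)}

def zeroDivisorGraph (R : Type*) [CommRing R] :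
    SimpleGraph {x : R // x ≠ 0 ∧ ∃ y : R, y ≠ 0 ∧ x * y = 0} :=
  SimpleGraph.fromRel (fun a b => (a : R) * (b : R) = 0)

/-!
Write `N = 2 ∏ q ^ e_q` over the odd primes `q`, with `e_q ≤ 2`. Two nonzero zero divisors are
adjacent iff for every odd `q` their `q`-valuations add up to at least `e_q`, and one of them is
even. For each odd `q` a single interval graph realizes the `q`-condition together with the parity
condition, except that two odd vertices both divisible by `q ^ e_q` stay adjacent there; the
intersection of these `a - 1` interval graphs is `Γ(ℤ_N)` because an odd vertex divisible by every
odd `q ^ e_q` is `N / 2`. Conversely the pairs `N / q ^ e_q`, `2 N / q ^ e_q` are non-edges, any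
two of them joined by all four cross edges. Interval graphs have no induced 4-cycle, so each
coordinate of a box representation separates at most one of these pairs.
-/

open Finset

section IntervalGraph

variable {V : Type*}

theorem Set.Icc_inter_Icc_nonempty_iff {α : Type*} [LinearOrder α] {a₁ b₁ a₂ b₂ : α} :
    (Set.Icc a₁ b₁ ∩ Set.Icc a₂ b₂).Nonempty ↔ a₁ ≤ b₁ ∧ a₁ ≤ b₂ ∧ a₂ ≤ b₁ ∧ a₂ ≤ b₂ := by
  rw [Set.Icc_inter_Icc, Set.nonempty_Icc, sup_le_iff, le_inf_iff, le_inf_iff]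
  tauto

def intervalGraph (lo hi : V → ℝ) : SimpleGraph V where
  Adj u v := u ≠ v ∧ (Set.Icc (lo u) (hi u) ∩ Set.Icc (lo v) (hi v)).Nonempty
  symm := ⟨fun _ _ h => ⟨h.1.symm, Set.inter_comm _ _ ▸ h.2⟩⟩
  loopless := ⟨fun _ h => h.1 rfl⟩

theorem isIntervalGraph_intervalGraph (lo hi : V → ℝ) : IsIntervalGraph (intervalGraph lo hi) :=
  ⟨lo, hi, fun _ _ huv => show _ ∧ _ ↔ _ from and_iff_right huv⟩

/-- Interval graphs have no induced 4-cycle `v₁ v₃ v₂ v₄`. -/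
theorem IsIntervalGraph.adj_or_adj_of_four_cycle {G : SimpleGraph V} (hG : IsIntervalGraph G)
    {v₁ v₂ v₃ v₄ : V} (h₁₂ : v₁ ≠ v₂) (h₃₄ : v₃ ≠ v₄) (h₁₃ : G.Adj v₁ v₃) (h₁₄ : G.Adj v₁ v₄)
    (h₂₃ : G.Adj v₂ v₃) (h₂₄ : G.Adj v₂ v₄) : G.Adj v₁ v₂ ∨ G.Adj v₃ v₄ := by
  obtain ⟨lo, hi, hrep⟩ := hG
  have h_meet : ∀ {u v}, G.Adj u v → lo u ≤ hi u ∧ lo u ≤ hi v ∧ lo v ≤ hi u ∧ lo v ≤ hi v :=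
    fun h => Set.Icc_inter_Icc_nonempty_iff.1 ((hrep _ _ h.ne).1 h)
  replace h₁₃ := h_meet h₁₃
  replace h₁₄ := h_meet h₁₄
  replace h₂₃ := h_meet h₂₃
  replace h₂₄ := h_meet h₂₄
  rw [hrep _ _ h₁₂, hrep _ _ h₃₄, Set.Icc_inter_Icc_nonempty_iff, Set.Icc_inter_Icc_nonempty_iff]
  refine or_iff_not_imp_left.mpr fun h_disj => ?_
  -- the gap between the disjoint intervals of `v₁` and `v₂` lies in those of `v₃` and `v₄`
  have h_gap : hi v₁ < lo v₂ ∨ hi v₂ < lo v₁ := by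
    by_contra! h
    exact h_disj ⟨h₁₃.1, h.2, h.1, h₂₃.1⟩
  refine ⟨h₁₃.2.2.2, ?_, ?_, h₁₄.2.2.2⟩ <;> rcases h_gap with h | h <;> linarith

end IntervalGraph

section Boxicity

variable {V : Type*} {G : SimpleGraph V}

def IsBoxRepresentation (G : SimpleGraph V) {ι : Type*} (I : ι → SimpleGraph V) : Prop :=
  (∀ i, IsIntervalGraph (I i)) ∧ ∀ u v, G.Adj u v ↔ u ≠ v ∧ ∀ i, (I i).Adj u v

theorem boxicity_eq_of_isBoxRepresentation {ι : Type*} [Fintype ι] {I : ι → SimpleGraph V}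
    (hI : IsBoxRepresentation G I)
    (hmin : ∀ d (J : Fin d → SimpleGraph V), IsBoxRepresentation G J → Fintype.card ι ≤ d) :
    boxicity G = Fintype.card ι := by
  have hmem : Fintype.card ι ∈ {d | ∃ J : Fin d → SimpleGraph V, IsBoxRepresentation G J} :=
    ⟨I ∘ (Fintype.equivFin ι).symm, fun _ => hI.1 _, fun u v => by
      rw [hI.2, ← (Fintype.equivFin ι).symm.forall_congr_right]
      rfl⟩
  exact le_antisymm (Nat.sInf_le hmem) (le_csInf ⟨_, hmem⟩ fun d ⟨J, hJ⟩ => hmin d J hJ)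

theorem IsBoxRepresentation.card_le {ι κ : Type*} [Fintype ι] [Fintype κ]
    {I : κ → SimpleGraph V} (hI : IsBoxRepresentation G I) {x y : ι → V}
    (hxy : ∀ i, x i ≠ y i) (hnadj : ∀ i, ¬ G.Adj (x i) (y i))
    (hadj : ∀ i j, i ≠ j → G.Adj (x i) (x j) ∧ G.Adj (x i) (y j) ∧ G.Adj (y i) (x j) ∧
      G.Adj (y i) (y j)) :
    Fintype.card ι ≤ Fintype.card κ := by
  have h_sep : ∀ i, ∃ k, ¬ (I k).Adj (x i) (y i) := fun i => by
    by_contra! h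
    exact hnadj i ((hI.2 _ _).2 ⟨hxy i, h⟩)
  choose F hF using h_sep
  have h_coord : ∀ {u v} (k : κ), G.Adj u v → (I k).Adj u v := fun k h => ((hI.2 _ _).1 h).2 k
  refine Fintype.card_le_of_injective F fun i j hij => by_contra fun hne => ?_
  obtain ⟨h₁, h₂, h₃, h₄⟩ := hadj i j hne
  rcases (hI.1 (F i)).adj_or_adj_of_four_cycle (hxy i) (hxy j) (h_coord _ h₁) (h_coord _ h₂)
    (h_coord _ h₃) (h_coord _ h₄) with h | h
  · exact hF i h
  · exact hF j (hij ▸ h)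

end Boxicity

section Slot

/-- Interval of a vertex in the coordinate of an odd prime `q` with `q ^ e ∥ N`: `f` is the
vertex's `q`-valuation, `P` says that it is even and `t ∈ (0, 1)` separates vertices of the same
kind. -/
noncomputable def slotLo (e f : ℕ) (P : Prop) [Decidable P] (t : ℝ) : ℝ :=
  if e ≤ f then 0 else if f = 0 then (if P then t else 3 + t) else (if P then 2 else 2 + t)

noncomputable def slotHi (e f : ℕ) (P : Prop) [Decidable P] (t : ℝ) : ℝ :=
  if e ≤ f then (if P then 4 else 2) else if f = 0 then (if P then t else 3 + t)
  else (if P then 3 else 2 + t)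

theorem slot_meet_iff {e f₁ f₂ : ℕ} {P₁ P₂ : Prop} [Decidable P₁] [Decidable P₂] {t₁ t₂ : ℝ}
    (he₁ : 1 ≤ e) (he₂ : e ≤ 2) (ht₁ : t₁ ∈ Set.Ioo 0 1) (ht₂ : t₂ ∈ Set.Ioo 0 1) (ht : t₁ ≠ t₂) :
    (Set.Icc (slotLo e f₁ P₁ t₁) (slotHi e f₁ P₁ t₁) ∩
        Set.Icc (slotLo e f₂ P₂ t₂) (slotHi e f₂ P₂ t₂)).Nonempty ↔
      e ≤ f₁ + f₂ ∧ (P₁ ∨ P₂ ∨ e ≤ f₁ ∧ e ≤ f₂) := by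
  obtain ⟨ht₁, ht₁'⟩ := ht₁
  obtain ⟨ht₂, ht₂'⟩ := ht₂
  rw [Set.Icc_inter_Icc_nonempty_iff]
  unfold slotLo slotHi
  split_ifs <;>
    refine ⟨fun ⟨h₁, h₂, h₃, h₄⟩ => ?_, fun ⟨h₁, h₂⟩ => ?_⟩ <;>
    first
      | omega
      | linarith
      | (rcases ht.lt_or_gt with h | h <;> linarith)
      | exact ⟨by omega, by tauto⟩
      | (refine ⟨?_, ?_, ?_, ?_⟩ <;> linarith)
      | (exfalso; tauto)

end Slot

section ZeroDivisorGraph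

abbrev NonzeroZeroDivisors (R : Type*) [CommRing R] : Type _ :=
  {x : R // x ≠ 0 ∧ ∃ y : R, y ≠ 0 ∧ x * y = 0}

variable {R : Type*} [CommRing R]

theorem zeroDivisorGraph_adj {u v : NonzeroZeroDivisors R} :
    (zeroDivisorGraph R).Adj u v ↔ u ≠ v ∧ (u : R) * v = 0 := by
  rw [zeroDivisorGraph, SimpleGraph.fromRel_adj, mul_comm (v : R), or_self]

theorem zeroDivisorGraph_adj_of_mul_eq_zero {u v : NonzeroZeroDivisors R} (h : (u : R) * v = 0)
    (hu : (u : R) * u ≠ 0) : (zeroDivisorGraph R).Adj u v :=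
  zeroDivisorGraph_adj.2 ⟨by rintro rfl; exact hu h, h⟩

end ZeroDivisorGraph

section Factorization

variable {N : ℕ}

theorem Nat.factorization_prod_pow_apply {ι : Type*} [Fintype ι] {p : ι → ℕ} (n : ι → ℕ)
    (hp : ∀ i, (p i).Prime) (q : ℕ) :
    (∏ i, p i ^ n i).factorization q = ∑ i with p i = q, n i := by
  rw [Nat.factorization_prod fun i _ => pow_ne_zero _ (hp i).ne_zero, Finset.sum_filter,
    Finsupp.finsetSum_apply]
  simp [(hp _).factorization_pow, Finsupp.single_apply]

theorem Nat.factorization_eq_zero_of_notMem_primeFactors {n q : ℕ} (h : q ∉ n.primeFactors) :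
    n.factorization q = 0 :=
  Finsupp.notMem_support_iff.1 h

theorem Nat.factorization_two_eq_one_of_mod_four (hN : N % 4 = 2) : N.factorization 2 = 1 := by
  have hN0 : N ≠ 0 := by omega
  have h₁ := (Nat.prime_two.pow_dvd_iff_le_factorization hN0 (k := 1)).1 (by omega)
  have h₂ := mt (Nat.prime_two.pow_dvd_iff_le_factorization hN0 (k := 2)).2 (by omega)
  omega

theorem Nat.dvd_ordCompl_mul_ordCompl {q q' : ℕ} (hN : N ≠ 0) (hqq' : q ≠ q') :
    N ∣ ordCompl[q] N * ordCompl[q'] N := by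
  have h₁ := (Nat.ordCompl_pos q hN).ne'
  have h₂ := (Nat.ordCompl_pos q' hN).ne'
  rw [← Nat.factorization_le_iff_dvd hN (mul_ne_zero h₁ h₂), Nat.factorization_mul h₁ h₂,
    Nat.factorization_ordCompl, Nat.factorization_ordCompl]
  intro r
  rcases eq_or_ne r q with rfl | hr
  · simp [Finsupp.erase_ne hqq']
  · simp [Finsupp.erase_ne hr]

theorem Nat.not_dvd_mul_ordCompl_sq {q m : ℕ} (hq : q.Prime) (hqN : q ∣ N) (hN : N ≠ 0)
    (hqm : ¬ q ∣ m) : ¬ N ∣ m * ordCompl[q] N ^ 2 := fun h => by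
  rcases (Nat.Prime.dvd_mul hq).1 (hqN.trans h) with h | h
  · exact hqm h
  · exact Nat.not_dvd_ordCompl hq hN (hq.dvd_of_dvd_pow h)

theorem Nat.ordProj_lt_of_two_dvd {q : ℕ} (hN : 2 ∣ N) (hN0 : N ≠ 0) (hq : q.Prime) (hq2 : q ≠ 2) :
    ordProj[q] N < N := by
  have h_two : 2 ∣ ordCompl[q] N := Nat.dvd_ordCompl_of_dvd_not_dvd hN
    fun h => hq2 ((Nat.prime_dvd_prime_iff_eq hq Nat.prime_two).1 h)
  have := Nat.le_of_dvd (Nat.ordCompl_pos q hN0) h_two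
  have := Nat.ordProj_pos N q
  conv_rhs => rw [← Nat.ordProj_mul_ordCompl_eq_self N q]
  nlinarith

end Factorization

section ZMod

variable {N : ℕ}

theorem ZMod.mul_eq_zero_iff_factorization_le [NeZero N] {x y : ZMod N} (hx : x ≠ 0) (hy : y ≠ 0) :
    x * y = 0 ↔ ∀ q, N.factorization q ≤ x.val.factorization q + y.val.factorization q := by
  have hx' : x.val ≠ 0 := (ZMod.val_ne_zero x).2 hx
  have hy' : y.val ≠ 0 := (ZMod.val_ne_zero y).2 hy
  have h_cast : x * y = ((x.val * y.val : ℕ) : ZMod N) := by simp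
  rw [h_cast, ZMod.natCast_eq_zero_iff,
    ← Nat.factorization_le_iff_dvd (NeZero.ne N) (mul_ne_zero hx' hy'),
    Nat.factorization_mul hx' hy', Finsupp.le_def]
  rfl

theorem ZMod.val_eq_ordCompl_two (hN : N % 4 = 2) {x : ZMod N} (hx : x ≠ 0)
    (hfull : ∀ q ∈ N.primeFactors.erase 2, N.factorization q ≤ x.val.factorization q) :
    x.val = ordCompl[2] N := by
  have hN0 : N ≠ 0 := by omega
  have hx' : x.val ≠ 0 := (ZMod.val_ne_zero x).2 hx
  have h_dvd : ordCompl[2] N ∣ x.val := by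
    rw [← Nat.factorization_le_iff_dvd (Nat.ordCompl_pos 2 hN0).ne' hx', Nat.factorization_ordCompl]
    intro q
    rcases eq_or_ne q 2 with rfl | hq2
    · simp
    rw [Finsupp.erase_ne hq2]
    by_cases hq : q ∈ N.primeFactors
    · exact hfull q (Finset.mem_erase.2 ⟨hq2, hq⟩)
    · simp [Nat.factorization_eq_zero_of_notMem_primeFactors hq]
  have h_two : N = 2 * ordCompl[2] N := by
    conv_lhs => rw [← Nat.ordProj_mul_ordCompl_eq_self N 2]
    rw [Nat.factorization_two_eq_one_of_mod_four hN, pow_one]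
  have : NeZero N := ⟨hN0⟩
  exact Nat.eq_of_dvd_of_lt_two_mul hx' h_dvd (h_two ▸ ZMod.val_lt x)

end ZMod

section UpperBound

variable {N : ℕ}

noncomputable def tieBreak (x : ZMod N) : ℝ := ((x.val : ℝ) + 2)⁻¹

theorem tieBreak_mem_Ioo (x : ZMod N) : tieBreak x ∈ Set.Ioo 0 1 := by
  have : (0 : ℝ) ≤ x.val := Nat.cast_nonneg _
  exact ⟨by unfold tieBreak; positivity, inv_lt_one_of_one_lt₀ (by linarith)⟩

theorem tieBreak_injective [NeZero N] : Function.Injective (tieBreak (N := N)) := fun x y h => by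
  unfold tieBreak at h
  rw [inv_inj, add_left_inj, Nat.cast_inj] at h
  exact ZMod.val_injective N h

noncomputable def primeCoordGraph (N q : ℕ) : SimpleGraph (NonzeroZeroDivisors (ZMod N)) :=
  intervalGraph
    (fun x => slotLo (N.factorization q) (x.1.val.factorization q) (2 ∣ x.1.val) (tieBreak x.1))
    (fun x => slotHi (N.factorization q) (x.1.val.factorization q) (2 ∣ x.1.val) (tieBreak x.1))

theorem primeCoordGraph_adj [NeZero N] {q : ℕ} (hq₁ : 1 ≤ N.factorization q)
    (hq₂ : N.factorization q ≤ 2) {u v : NonzeroZeroDivisors (ZMod N)} (huv : u ≠ v) :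
    (primeCoordGraph N q).Adj u v ↔
      N.factorization q ≤ u.1.val.factorization q + v.1.val.factorization q ∧
        (2 ∣ u.1.val ∨ 2 ∣ v.1.val ∨
          N.factorization q ≤ u.1.val.factorization q ∧
            N.factorization q ≤ v.1.val.factorization q) :=
  (and_iff_right huv).trans <| slot_meet_iff hq₁ hq₂ (tieBreak_mem_Ioo _) (tieBreak_mem_Ioo _)
    (tieBreak_injective.ne (Subtype.coe_ne_coe.2 huv))

theorem isBoxRepresentation_primeCoordGraph (hN : N % 4 = 2)
    (hsmall : ∀ q, q ≠ 2 → N.factorization q ≤ 2) :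
    IsBoxRepresentation (zeroDivisorGraph (ZMod N))
      (fun q : N.primeFactors.erase 2 => primeCoordGraph N q) := by
  have hN0 : N ≠ 0 := by omega
  have : NeZero N := ⟨hN0⟩
  have h_exp : ∀ q ∈ N.primeFactors.erase 2, 1 ≤ N.factorization q ∧ N.factorization q ≤ 2 :=
    fun q hq => ⟨Nat.pos_of_ne_zero (Finsupp.mem_support_iff.1 (Finset.mem_of_mem_erase hq)),
      hsmall q (Finset.ne_of_mem_erase hq)⟩
  have h_even : ∀ x : NonzeroZeroDivisors (ZMod N), 2 ∣ x.1.val ↔ 1 ≤ x.1.val.factorization 2 :=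
    fun x => Nat.prime_two.dvd_iff_one_le_factorization ((ZMod.val_ne_zero _).2 x.2.1)
  have h_two := Nat.factorization_two_eq_one_of_mod_four hN
  refine ⟨fun _ => isIntervalGraph_intervalGraph _ _, fun u v => ?_⟩
  rw [zeroDivisorGraph_adj, ZMod.mul_eq_zero_iff_factorization_le u.2.1 v.2.1]
  refine and_congr_right fun huv => ?_
  rw [forall_congr' fun q : N.primeFactors.erase 2 =>
    primeCoordGraph_adj (h_exp q q.2).1 (h_exp q q.2).2 huv]
  refine ⟨fun h q => ⟨h q, ?_⟩, fun h r => ?_⟩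
  · have := h 2
    rw [h_even, h_even]
    omega
  by_cases hr : r ∈ N.primeFactors.erase 2
  · exact (h ⟨r, hr⟩).1
  rcases eq_or_ne r 2 with rfl | hr2
  · -- two odd vertices divisible by all odd prime powers of `N` are both `N / 2`
    rw [h_two]
    by_contra! h_odd
    have hu : ¬ 2 ∣ u.1.val := by rw [h_even]; omega
    have hv : ¬ 2 ∣ v.1.val := by rw [h_even]; omega
    have h_full := fun q hq => ((h ⟨q, hq⟩).2.resolve_left hu).resolve_left hv
    exact huv <| Subtype.ext <| ZMod.val_injective N <|
      (ZMod.val_eq_ordCompl_two hN u.2.1 fun q hq => (h_full q hq).1).trans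
        (ZMod.val_eq_ordCompl_two hN v.2.1 fun q hq => (h_full q hq).2).symm
  · simp [Nat.factorization_eq_zero_of_notMem_primeFactors
      fun hr' => hr (Finset.mem_erase.2 ⟨hr2, hr'⟩)]

end UpperBound

section LowerBound

variable {N : ℕ}

theorem card_le_of_isBoxRepresentation_zmod (hN : 2 ∣ N) (hN0 : N ≠ 0) {κ : Type*} [Fintype κ]
    {J : κ → SimpleGraph (NonzeroZeroDivisors (ZMod N))}
    (hJ : IsBoxRepresentation (zeroDivisorGraph (ZMod N)) J) :
    #(N.primeFactors.erase 2) ≤ Fintype.card κ := by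
  set s : ℕ → ZMod N := fun q => ((ordCompl[q] N : ℕ) : ZMod N) with hs
  have h_cross : ∀ q q', q ≠ q' → s q * s q' = 0 := fun q q' h => by
    rw [hs, ← Nat.cast_mul, ZMod.natCast_eq_zero_iff]
    exact Nat.dvd_ordCompl_mul_ordCompl hN0 h
  have h_sq : ∀ q ∈ N.primeFactors.erase 2, ∀ k, (2 : ZMod N) ^ k * s q ^ 2 ≠ 0 := by
    intro q hq k
    obtain ⟨hq2, hq⟩ := Finset.mem_erase.1 hq
    obtain ⟨hqp, hqN, -⟩ := Nat.mem_primeFactors.1 hq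
    have := Nat.not_dvd_mul_ordCompl_sq hqp hqN hN0 (m := 2 ^ k)
      fun h => hq2 ((Nat.prime_dvd_prime_iff_eq hqp Nat.prime_two).1 (hqp.dvd_of_dvd_pow h))
    rwa [← ZMod.natCast_eq_zero_iff, Nat.cast_mul, Nat.cast_pow, Nat.cast_pow,
      Nat.cast_ofNat] at this
  have h_partner : ∀ q ∈ N.primeFactors.erase 2,
      ((ordProj[q] N : ℕ) : ZMod N) ≠ 0 ∧ s q * (ordProj[q] N : ℕ) = 0 := by
    intro q hq
    obtain ⟨hq2, hq⟩ := Finset.mem_erase.1 hq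
    refine ⟨fun h => ?_, ?_⟩
    · rw [ZMod.natCast_eq_zero_iff] at h
      exact (Nat.ordProj_lt_of_two_dvd hN hN0 (Nat.prime_of_mem_primeFactors hq) hq2).not_ge
        (Nat.le_of_dvd (Nat.ordProj_pos N q) h)
    · rw [hs, ← Nat.cast_mul, mul_comm, Nat.ordProj_mul_ordCompl_eq_self, ZMod.natCast_self]
  let x : N.primeFactors.erase 2 → NonzeroZeroDivisors (ZMod N) := fun q =>
    ⟨s q, fun h => h_sq q q.2 0 (by linear_combination s q * h), _, h_partner q q.2⟩
  let y : N.primeFactors.erase 2 → NonzeroZeroDivisors (ZMod N) := fun q =>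
    ⟨2 * s q, fun h => h_sq q q.2 2 (by linear_combination 2 * s q * h), _,
      (h_partner q q.2).1, by rw [mul_assoc, (h_partner q q.2).2, mul_zero]⟩
  have h_xx : ∀ q, (x q : ZMod N) * x q ≠ 0 := fun q h => h_sq q q.2 0 (by linear_combination h)
  have h_yy : ∀ q, (y q : ZMod N) * y q ≠ 0 := fun q h => h_sq q q.2 2 (by linear_combination h)
  have := hJ.card_le (x := x) (y := y)
    (fun q h => (x q).2.1 (by linear_combination -congrArg Subtype.val h))
    (fun q h => h_sq q q.2 1 (by linear_combination (zeroDivisorGraph_adj.1 h).2))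
    (fun q q' hqq' => by
      have h := h_cross q q' (Subtype.coe_ne_coe.2 hqq')
      exact ⟨zeroDivisorGraph_adj_of_mul_eq_zero h (h_xx q),
        zeroDivisorGraph_adj_of_mul_eq_zero (by linear_combination 2 * h) (h_xx q),
        zeroDivisorGraph_adj_of_mul_eq_zero (by linear_combination 2 * h) (h_yy q),
        zeroDivisorGraph_adj_of_mul_eq_zero (by linear_combination 4 * h) (h_yy q)⟩)
  rwa [Fintype.card_coe] at this

end LowerBound

theorem boxicity_zeroDivisorGraph_zmod {N : ℕ} (hN : N % 4 = 2)
    (hsmall : ∀ q, q ≠ 2 → N.factorization q ≤ 2) :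
    boxicity (zeroDivisorGraph (ZMod N)) = #(N.primeFactors.erase 2) := by
  rw [← Fintype.card_coe]
  refine boxicity_eq_of_isBoxRepresentation (isBoxRepresentation_primeCoordGraph hN hsmall)
    fun d J hJ => ?_
  rw [Fintype.card_coe, ← Fintype.card_fin d]
  exact card_le_of_isBoxRepresentation_zmod (by omega) (by omega) hJ

theorem stmt_11_general (N a : ℕ) (p n : Fin a → ℕ)
    (hp : ∀ i, (p i).Prime) (hmono : StrictMono p) (hn : ∀ i, 0 < n i)
    (hN : N = ∏ i, p i ^ n i) (hmod : N % 4 = 2)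
    (hsmall : ∀ i, p i ≠ 2 → n i ≤ 2) :
    boxicity (zeroDivisorGraph (ZMod N)) = a - 1 := by
  have h_fact : ∀ q, N.factorization q = ∑ i with p i = q, n i :=
    hN ▸ Nat.factorization_prod_pow_apply n hp
  have h_exp : ∀ j, N.factorization (p j) = n j := fun j => by
    rw [h_fact, Finset.filter_congr fun i _ => hmono.injective.eq_iff, Finset.filter_eq',
      if_pos (Finset.mem_univ j), Finset.sum_singleton]
  have h_primeFactors : N.primeFactors = univ.image p := by
    ext q
    rw [← Nat.support_factorization, Finsupp.mem_support_iff, h_fact, Ne,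
      Finset.sum_eq_zero_iff]
    simp [(hn _).ne']
  have h_two : 2 ∈ N.primeFactors := Nat.mem_primeFactors.2 ⟨Nat.prime_two, by omega, by omega⟩
  rw [boxicity_zeroDivisorGraph_zmod hmod fun q hq => ?_, card_erase_of_mem h_two, h_primeFactors,
    card_image_of_injective _ hmono.injective, card_univ, Fintype.card_fin]
  by_cases hq' : q ∈ N.primeFactors
  · obtain ⟨i, -, rfl⟩ := mem_image.1 (h_primeFactors ▸ hq')
    exact h_exp i ▸ hsmall i hq
  · simp [Nat.factorization_eq_zero_of_notMem_primeFactors hq']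

theorem stmt_11 (N a : ℕ) (p n : Fin a → ℕ) (ha : 2 ≤ a)
    (hp : ∀ i, (p i).Prime) (hmono : StrictMono p) (hn : ∀ i, 0 < n i)
    (hN : N = ∏ i, p i ^ n i) (hmod : N % 4 = 2)
    (hsmall : ∀ i, p i ≠ 2 → n i ≤ 2) :
    boxicity (zeroDivisorGraph (ZMod N)) = a - 1 :=
  stmt_11_general N a p n hp hmono hn hN hmod hsmall
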